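/- arXiv:2204.07219 — 4 statements merged into one kernel-verified Lean document; each statement's English description precedes it below -/
import Mathlib

section
/- Let G = (U, V, E) be a bipartite graph with |U| = |V| = n and degree sequences α_1 ≥ α_2 ≥ … ≥ α_n on U and β_1 ≥ β_2 ≥ … ≥ β_n on V (sorted in nonincreasing order). For any natural number k with n ≥ k ≥ 1, there exists s ∈ {1, 2, …, n−k+1} such that α_s ≤ β_{s+k−1} + k − 1. -/
open Finset

lemma card_filter_val_lt (n m : ℕ) (h : m ≤ n) :
    (univ.filter (fun i : Fin n => i.val < m)).card = m := by
  have : (univ.filter (fun i : Fin n => i.val < m)) =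
      (range m).attachFin (by intro x hx; exact lt_of_lt_of_le (mem_range.mp hx) h) := by
    ext i; simp [Finset.mem_attachFin]
  rw [this, Finset.card_attachFin, card_range]

theorem exists_small_spread_index (n k : ℕ) (hk1 : 1 ≤ k) (hkn : k ≤ n)
    (Z : Fin n → Fin n → ℕ) (hZ : ∀ i j, Z i j ≤ 1)
    (α β : Fin n → ℕ) (hα : Antitone α) (hβ : Antitone β)
    (hαZ : ∃ σ : Equiv.Perm (Fin n), ∀ i, α i = ∑ j, Z (σ i) j)
    (hβZ : ∃ τ : Equiv.Perm (Fin n), ∀ j, β j = ∑ i, Z i (τ j)) :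
    ∃ s : ℕ, ∃ hs : s + k ≤ n,
      α ⟨s, by omega⟩ ≤ β ⟨s + k - 1, by omega⟩ + (k - 1) := by
  by_contra hcon
  push_neg at hcon
  obtain ⟨σ, hσ⟩ := hαZ
  obtain ⟨τ, hτ⟩ := hβZ
  obtain ⟨k', rfl⟩ : ∃ k', k = k' + 1 := ⟨k - 1, by omega⟩
  have hr1 : 1 ≤ n - k' := by omega
  have hrn : n - k' ≤ n := by omega
  -- shifted beta, total function
  set g : Fin n → ℕ := fun i => if h : i.val + k' < n then β ⟨i.val + k', h⟩ else 0
    with hg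
  -- the contradiction hypothesis, cleaned up
  have key : ∀ s : Fin n, s.val < n - k' → g s + (k' + 1) ≤ α s := by
    intro s hs
    have h := hcon s.val (by omega)
    have hlt : s.val + k' < n := by omega
    have e2 : s.val + (k' + 1) - 1 = s.val + k' := by omega
    simp only [e2] at h
    have e3 : g s = β ⟨s.val + k', hlt⟩ := by rw [hg]; exact dif_pos hlt
    rw [e3]
    have e1 : α (⟨s.val, s.isLt⟩ : Fin n) = α s := rfl
    omega
  set S : Finset (Fin n) := univ.filter (fun i : Fin n => i.val < n - k') with hS
  have hScard : S.card = n - k' := card_filter_val_lt n (n - k') hrn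
  set Sc : Finset (Fin n) := univ.filter (fun j : Fin n => k' ≤ j.val) with hSc
  -- upper bound
  have hup : ∑ i ∈ S, α i ≤ ∑ j, min (β j) (n - k') := by
    calc ∑ i ∈ S, α i = ∑ i ∈ S, ∑ j, Z (σ i) j := by
          exact Finset.sum_congr rfl fun i _ => hσ i
      _ = ∑ i ∈ S.image σ, ∑ j, Z i j := by
          rw [Finset.sum_image (fun a _ b _ h => σ.injective h)]
      _ = ∑ j, ∑ i ∈ S.image σ, Z i j := Finset.sum_comm
      _ ≤ ∑ j, min (∑ i, Z i j) (n - k') := by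
          apply Finset.sum_le_sum
          intro j _
          apply le_min
          · exact Finset.sum_le_sum_of_subset (Finset.subset_univ _)
          · calc ∑ i ∈ S.image σ, Z i j ≤ ∑ i ∈ S.image σ, 1 :=
                  Finset.sum_le_sum fun i _ => hZ i j
              _ = (S.image σ).card := by simp
              _ ≤ S.card := Finset.card_image_le
              _ = n - k' := hScard
      _ = ∑ j, min (∑ i, Z i (τ j)) (n - k') :=
          (Equiv.sum_comp τ (fun j => min (∑ i, Z i j) (n - k'))).symm
      _ = ∑ j, min (β j) (n - k') := by
          exact Finset.sum_congr rfl fun j _ => by rw [hτ j]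
  -- split the min sum
  have hsplit : ∑ j, min (β j) (n - k') ≤ k' * (n - k') + ∑ j ∈ Sc, β j := by
    have hpart := Finset.sum_filter_add_sum_filter_not univ
      (fun j : Fin n => j.val < k') (fun j => min (β j) (n - k'))
    have h1 : ∑ j ∈ univ.filter (fun j : Fin n => j.val < k'), min (β j) (n - k')
        ≤ k' * (n - k') := by
      calc ∑ j ∈ univ.filter (fun j : Fin n => j.val < k'), min (β j) (n - k')
          ≤ ∑ _j ∈ univ.filter (fun j : Fin n => j.val < k'), (n - k') :=
            Finset.sum_le_sum fun j _ => min_le_right _ _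
        _ = (univ.filter (fun j : Fin n => j.val < k')).card * (n - k') := by
            rw [Finset.sum_const, smul_eq_mul]
        _ = k' * (n - k') := by rw [card_filter_val_lt n k' (by omega)]
    have h2 : ∑ j ∈ univ.filter (fun j : Fin n => ¬ j.val < k'), min (β j) (n - k')
        ≤ ∑ j ∈ Sc, β j := by
      have hset : univ.filter (fun j : Fin n => ¬ j.val < k') = Sc := by
        ext j; simp only [hSc, Finset.mem_filter, Finset.mem_univ, true_and]; omega
      rw [hset]
      exact Finset.sum_le_sum fun j _ => min_le_left _ _
    omega
  -- bijection between S (shifted) and Sc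
  have hbij : ∑ i ∈ S, g i = ∑ j ∈ Sc, β j := by
    apply Finset.sum_nbij' (fun i => (⟨min (i.val + k') (n-1), by omega⟩ : Fin n))
      (fun j => (⟨j.val - k', by omega⟩ : Fin n))
    · intro i hi
      simp only [hS, Finset.mem_filter, Finset.mem_univ, true_and] at hi
      simp only [hSc, Finset.mem_filter, Finset.mem_univ, true_and]
      omega
    · intro j hj
      simp only [hSc, Finset.mem_filter, Finset.mem_univ, true_and] at hj
      simp only [hS, Finset.mem_filter, Finset.mem_univ, true_and]
      omega
    · intro i hi
      simp only [hS, Finset.mem_filter, Finset.mem_univ, true_and] at hi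
      ext; simp; omega
    · intro j hj
      simp only [hSc, Finset.mem_filter, Finset.mem_univ, true_and] at hj
      ext; simp; omega
    · intro i hi
      simp only [hS, Finset.mem_filter, Finset.mem_univ, true_and] at hi
      have hlt : i.val + k' < n := by omega
      have e3 : g i = β ⟨i.val + k', hlt⟩ := by rw [hg]; exact dif_pos hlt
      rw [e3]
      congr 1
      ext
      simp only []
      omega
  -- lower bound
  have hlow : (n - k') * (k' + 1) + ∑ j ∈ Sc, β j ≤ ∑ i ∈ S, α i := by
    calc (n - k') * (k' + 1) + ∑ j ∈ Sc, β j
        = ∑ i ∈ S, (g i + (k' + 1)) := by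
          rw [Finset.sum_add_distrib, Finset.sum_const, hScard, smul_eq_mul, hbij]
          omega
      _ ≤ ∑ i ∈ S, α i := by
          apply Finset.sum_le_sum
          intro i hi
          simp only [hS, Finset.mem_filter, Finset.mem_univ, true_and] at hi
          exact key i hi
  have hfinal : (n - k') * (k' + 1) + ∑ j ∈ Sc, β j
      ≤ k' * (n - k') + ∑ j ∈ Sc, β j :=
    le_trans hlow (le_trans hup hsplit)
  have hmul : (n - k') * (k' + 1) = k' * (n - k') + (n - k') := by ring
  omega
end

section
/- Let Z be an n × n matrix with entries in {0, 1}, let r_i = Σ_j Z_{i,j} denote its row sums and c_j = Σ_i Z_{i,j} its column sums. For any k with n ≥ k > n/2, the number of pairs (i, j) ∈ {1,…,n}² with |r_i − c_j| ≥ k is at most 2k(n−k). -/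
open Finset

/-- A "matching" inside the pair set `{(i,j) | γ j + k ≤ ρ i}`. -/
def MRCIsM {n : ℕ} (k : ℕ) (ρ γ : Fin n → ℕ) (M : Finset (Fin n × Fin n)) : Prop :=
  (∀ p ∈ M, γ p.2 + k ≤ ρ p.1) ∧
  (∀ p ∈ M, ∀ q ∈ M, p.1 = q.1 → p = q) ∧
  (∀ p ∈ M, ∀ q ∈ M, p.2 = q.2 → p = q)

lemma mrc_matching_le {n : ℕ} (k : ℕ) (ρ γ : Fin n → ℕ)
    (hcount : ∀ R C : Finset (Fin n),
      (∑ i ∈ R, ρ i) ≤ (∑ j ∈ C, γ j) + R.card * (n - C.card))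
    (M : Finset (Fin n × Fin n)) (hM : MRCIsM k ρ γ M) : M.card ≤ n - k := by
  rcases Nat.eq_zero_or_pos M.card with h0 | hpos
  · omega
  obtain ⟨hpair, hfst, hsnd⟩ := hM
  have hRcard : (M.image Prod.fst).card = M.card :=
    Finset.card_image_of_injOn (fun p hp q hq h => hfst p hp q hq h)
  have hCcard : (M.image Prod.snd).card = M.card :=
    Finset.card_image_of_injOn (fun p hp q hq h => hsnd p hp q hq h)
  have hsumR : ∑ i ∈ M.image Prod.fst, ρ i = ∑ p ∈ M, ρ p.1 :=
    Finset.sum_image (fun p hp q hq h => hfst p hp q hq h)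
  have hsumC : ∑ j ∈ M.image Prod.snd, γ j = ∑ p ∈ M, γ p.2 :=
    Finset.sum_image (fun p hp q hq h => hsnd p hp q hq h)
  have h1 : ∑ p ∈ M, (γ p.2 + k) ≤ ∑ p ∈ M, ρ p.1 := Finset.sum_le_sum hpair
  rw [Finset.sum_add_distrib, Finset.sum_const, smul_eq_mul] at h1
  have h2 := hcount (M.image Prod.fst) (M.image Prod.snd)
  rw [hsumR, hsumC, hRcard, hCcard] at h2
  have hsn : M.card ≤ n := by
    have h := (M.image Prod.snd).card_le_univ
    simp only [Finset.card_univ, Fintype.card_fin] at h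
    omega
  have h3 : M.card * k ≤ M.card * (n - M.card) := by
    have := le_trans h1 h2
    omega
  have h4 : k ≤ n - M.card := Nat.le_of_mul_le_mul_left h3 hpos
  omega

lemma mrc_build {n : ℕ} (k : ℕ) (ρ γ : Fin n → ℕ) (hρ : ∀ i, ρ i ≤ n) (hγ : ∀ j, γ j ≤ n) :
    ∀ (s : ℕ) (R C : Finset (Fin n)),
      (∀ t, t ≤ n + 1 →
        s ≤ (R.filter (fun i => k + t ≤ ρ i)).card + (C.filter (fun j => γ j < t)).card) →
      ∃ M : Finset (Fin n × Fin n), M.card = s ∧ (∀ p ∈ M, p.1 ∈ R) ∧ (∀ p ∈ M, p.2 ∈ C) ∧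
        MRCIsM k ρ γ M := by
  intro s
  induction s with
  | zero =>
    exact fun R C _ => ⟨∅, by simp, by simp, by simp, by simp [MRCIsM]⟩
  | succ s ih =>
    intro R C hcov
    have hCne : C.Nonempty := by
      have h := hcov (n + 1) le_rfl
      have hu : (R.filter (fun i => k + (n + 1) ≤ ρ i)) = ∅ := by
        apply Finset.filter_eq_empty_iff.mpr
        intro i _
        have := hρ i; omega
      have hv : (C.filter (fun j => γ j < n + 1)) = C := by
        apply Finset.filter_eq_self.mpr
        intro j _; have := hγ j; omega
      rw [hu, hv] at h
      simp only [Finset.card_empty, Nat.zero_add] at h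
      exact Finset.card_pos.mp (by omega)
    obtain ⟨j', hj'C, hj'min⟩ := C.exists_min_image γ hCne
    have hc'n : γ j' ≤ n := hγ j'
    have hCf0 : ∀ t, t ≤ γ j' → (C.filter (fun j => γ j < t)).card = 0 := by
      intro t ht
      rw [Finset.card_eq_zero]
      apply Finset.filter_eq_empty_iff.mpr
      intro j hj
      have := hj'min j hj; omega
    have hRge : s + 1 ≤ (R.filter (fun i => k + γ j' ≤ ρ i)).card := by
      have h := hcov (γ j') (by omega)
      have h0 := hCf0 (γ j') le_rfl
      omega
    have hRne : (R.filter (fun i => k + γ j' ≤ ρ i)).Nonempty :=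
      Finset.card_pos.mp (by omega)
    obtain ⟨i', hi'mem, hi'min⟩ := (R.filter (fun i => k + γ j' ≤ ρ i)).exists_min_image ρ hRne
    have hi'R : i' ∈ R := (Finset.mem_filter.mp hi'mem).1
    have hi'ρ : k + γ j' ≤ ρ i' := (Finset.mem_filter.mp hi'mem).2
    have hcov' : ∀ t, t ≤ n + 1 →
        s ≤ ((R.erase i').filter (fun i => k + t ≤ ρ i)).card +
            ((C.erase j').filter (fun j => γ j < t)).card := by
      intro t ht
      have e1 : (R.erase i').filter (fun i => k + t ≤ ρ i)
          = (R.filter (fun i => k + t ≤ ρ i)).erase i' := Finset.filter_erase _ _ _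
      have e2 : (C.erase j').filter (fun j => γ j < t)
          = (C.filter (fun j => γ j < t)).erase j' := Finset.filter_erase _ _ _
      by_cases htc : t ≤ γ j'
      · have h0 := hCf0 t htc
        have h := hcov t ht
        have hcard : s + 1 ≤ (R.filter (fun i => k + t ≤ ρ i)).card := by omega
        have he : (R.filter (fun i => k + t ≤ ρ i)).card - 1
            ≤ ((R.filter (fun i => k + t ≤ ρ i)).erase i').card :=
          Finset.pred_card_le_card_erase
        rw [e1, e2]
        omega
      · by_cases hit : k + t ≤ ρ i'
        · have hsub : R.filter (fun i => k + γ j' ≤ ρ i) ⊆ R.filter (fun i => k + t ≤ ρ i) := by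
            intro x hx
            rcases Finset.mem_filter.mp hx with ⟨hxR, _⟩
            exact Finset.mem_filter.mpr ⟨hxR, le_trans hit (hi'min x hx)⟩
          have hcard : s + 1 ≤ (R.filter (fun i => k + t ≤ ρ i)).card :=
            le_trans hRge (Finset.card_le_card hsub)
          have he : (R.filter (fun i => k + t ≤ ρ i)).card - 1
              ≤ ((R.filter (fun i => k + t ≤ ρ i)).erase i').card :=
            Finset.pred_card_le_card_erase
          rw [e1, e2]
          omega
        · have hnot : i' ∉ R.filter (fun i => k + t ≤ ρ i) := by
            intro hmem
            exact hit (Finset.mem_filter.mp hmem).2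
          have e1' : ((R.filter (fun i => k + t ≤ ρ i)).erase i')
              = R.filter (fun i => k + t ≤ ρ i) := Finset.erase_eq_of_notMem hnot
          have hj'in : j' ∈ C.filter (fun j => γ j < t) :=
            Finset.mem_filter.mpr ⟨hj'C, by omega⟩
          have e2card : ((C.filter (fun j => γ j < t)).erase j').card
              = (C.filter (fun j => γ j < t)).card - 1 := Finset.card_erase_of_mem hj'in
          have hCf1 : 1 ≤ (C.filter (fun j => γ j < t)).card :=
            Finset.card_pos.mpr ⟨j', hj'in⟩
          have h := hcov t ht
          rw [e1, e2, e1', e2card]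
          omega
    obtain ⟨M', hM'card, hM'R, hM'C, hM'IsM⟩ := ih (R.erase i') (C.erase j') hcov'
    obtain ⟨hM'pair, hM'fst, hM'snd⟩ := hM'IsM
    have hnotM' : (i', j') ∉ M' := by
      intro hmem
      have := hM'R _ hmem
      exact (Finset.mem_erase.mp this).1 rfl
    refine ⟨insert (i', j') M', ?_, ?_, ?_, ?_, ?_, ?_⟩
    · rw [Finset.card_insert_of_notMem hnotM', hM'card]
    · intro p hp
      rcases Finset.mem_insert.mp hp with h | h
      · rw [h]; exact hi'R
      · exact Finset.mem_of_mem_erase (hM'R p h)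
    · intro p hp
      rcases Finset.mem_insert.mp hp with h | h
      · rw [h]; exact hj'C
      · exact Finset.mem_of_mem_erase (hM'C p h)
    · intro p hp
      rcases Finset.mem_insert.mp hp with h | h
      · rw [h]; simpa using by omega
      · exact hM'pair p h
    · intro p hp q hq hpq
      rcases Finset.mem_insert.mp hp with h | h <;> rcases Finset.mem_insert.mp hq with h' | h'
      · rw [h, h']
      · exfalso
        have := hM'R q h'
        rw [h] at hpq
        exact (Finset.mem_erase.mp this).1 hpq.symm
      · exfalso
        have := hM'R p h
        rw [h'] at hpq
        exact (Finset.mem_erase.mp this).1 hpq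
      · exact hM'fst p h q h' hpq
    · intro p hp q hq hpq
      rcases Finset.mem_insert.mp hp with h | h <;> rcases Finset.mem_insert.mp hq with h' | h'
      · rw [h, h']
      · exfalso
        have := hM'C q h'
        rw [h] at hpq
        exact (Finset.mem_erase.mp this).1 hpq.symm
      · exfalso
        have := hM'C p h
        rw [h'] at hpq
        exact (Finset.mem_erase.mp this).1 hpq
      · exact hM'snd p h q h' hpq

lemma mrc_oneSide {n : ℕ} (k : ℕ) (hk : n < 2 * k) (ρ γ : Fin n → ℕ)
    (hρ : ∀ i, ρ i ≤ n) (hγ : ∀ j, γ j ≤ n)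
    (hcount : ∀ R C : Finset (Fin n),
      (∑ i ∈ R, ρ i) ≤ (∑ j ∈ C, γ j) + R.card * (n - C.card)) :
    ∃ a ≤ n - k, (∃ M, M.card = a ∧ MRCIsM k ρ γ M) ∧
      ∀ (b : ℕ) (M' : Finset (Fin n × Fin n)), M'.card = b → MRCIsM k γ ρ M' →
        (univ.filter (fun p : Fin n × Fin n => γ p.2 + k ≤ ρ p.1)).card ≤ a * (n - b) := by
  classical
  set 𝓜 := (univ : Finset (Finset (Fin n × Fin n))).filter (fun M => MRCIsM k ρ γ M) with h𝓜
  have hne : 𝓜.Nonempty := ⟨∅, Finset.mem_filter.mpr ⟨Finset.mem_univ _, by simp [MRCIsM]⟩⟩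
  obtain ⟨Mmax, hMmax𝓜, hMsup⟩ := Finset.exists_mem_eq_sup 𝓜 hne Finset.card
  set a := 𝓜.sup Finset.card with ha
  have hMmax : MRCIsM k ρ γ Mmax := (Finset.mem_filter.mp hMmax𝓜).2
  have hmax : ∀ M, MRCIsM k ρ γ M → M.card ≤ a := fun M hM =>
    Finset.le_sup (Finset.mem_filter.mpr ⟨Finset.mem_univ _, hM⟩)
  have hale : a ≤ n - k := by
    rw [hMsup]; exact mrc_matching_le k ρ γ hcount Mmax hMmax
  refine ⟨a, hale, ⟨Mmax, hMsup.symm, hMmax⟩, ?_⟩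
  intro b M' hM'card hM'
  have hex : ∃ t ≤ n + 1,
      (univ.filter (fun i => k + t ≤ ρ i)).card
        + (univ.filter (fun j : Fin n => γ j < t)).card ≤ a := by
    by_contra hcon
    push_neg at hcon
    obtain ⟨M, hMcard, -, -, hMIs⟩ := mrc_build k ρ γ hρ hγ (a + 1) univ univ
      (fun t ht => Nat.succ_le_of_lt (hcon t ht))
    have := hmax M hMIs
    omega
  obtain ⟨t, ht, hcov⟩ := hex
  obtain ⟨hp', hf', hs'⟩ := hM'
  have hD : (M'.image Prod.fst).card = b := by
    rw [Finset.card_image_of_injOn (fun p hp q hq h => hf' p hp q hq h), hM'card]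
  have hE : (M'.image Prod.snd).card = b := by
    rw [Finset.card_image_of_injOn (fun p hp q hq h => hs' p hp q hq h), hM'card]
  set U := univ.filter (fun i : Fin n => k + t ≤ ρ i) with hU
  set V := univ.filter (fun j : Fin n => γ j < t) with hV
  set H := univ.filter (fun i : Fin n => k ≤ ρ i) with hH
  set L := univ.filter (fun j : Fin n => γ j ≤ n - k) with hL
  have hsubset : univ.filter (fun p : Fin n × Fin n => γ p.2 + k ≤ ρ p.1) ⊆ U ×ˢ L ∪ H ×ˢ V := by
    intro p hp
    have hpair := (Finset.mem_filter.mp hp).2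
    by_cases hv : γ p.2 < t
    · exact Finset.mem_union_right _ (Finset.mem_product.mpr
        ⟨Finset.mem_filter.mpr ⟨Finset.mem_univ _, by omega⟩,
         Finset.mem_filter.mpr ⟨Finset.mem_univ _, hv⟩⟩)
    · refine Finset.mem_union_left _ (Finset.mem_product.mpr
        ⟨Finset.mem_filter.mpr ⟨Finset.mem_univ _, by omega⟩,
         Finset.mem_filter.mpr ⟨Finset.mem_univ _, ?_⟩⟩)
      have := hρ p.1
      omega
  have hLD : Disjoint L (M'.image Prod.fst) := by
    rw [Finset.disjoint_left]
    intro j hjL hjD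
    obtain ⟨p, hpM, rfl⟩ := Finset.mem_image.mp hjD
    have h1 := hp' p hpM
    have h2 := (Finset.mem_filter.mp hjL).2
    omega
  have hHE : Disjoint H (M'.image Prod.snd) := by
    rw [Finset.disjoint_left]
    intro i hiH hiE
    obtain ⟨p, hpM, rfl⟩ := Finset.mem_image.mp hiE
    have h1 := hp' p hpM
    have h2 := (Finset.mem_filter.mp hiH).2
    have h3 := hγ p.1
    omega
  have huniv : ∀ X : Finset (Fin n), X.card ≤ n := by
    intro X
    have := X.card_le_univ
    simpa using this
  have hLcard : L.card ≤ n - b := by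
    have h1 := Finset.card_union_of_disjoint hLD
    have h2 := huniv (L ∪ M'.image Prod.fst)
    omega
  have hHcard : H.card ≤ n - b := by
    have h1 := Finset.card_union_of_disjoint hHE
    have h2 := huniv (H ∪ M'.image Prod.snd)
    omega
  calc (univ.filter (fun p : Fin n × Fin n => γ p.2 + k ≤ ρ p.1)).card
      ≤ (U ×ˢ L ∪ H ×ˢ V).card := Finset.card_le_card hsubset
    _ ≤ U.card * L.card + H.card * V.card := by
        refine le_trans (Finset.card_union_le _ _) ?_
        rw [Finset.card_product, Finset.card_product]
    _ ≤ U.card * (n - b) + (n - b) * V.card :=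
        Nat.add_le_add (Nat.mul_le_mul_left _ hLcard) (Nat.mul_le_mul_right _ hHcard)
    _ = (U.card + V.card) * (n - b) := by ring
    _ ≤ a * (n - b) := Nat.mul_le_mul_right _ hcov

theorem matrix_row_col_sum_difference_bound (n k : ℕ) (hkn : k ≤ n) (hk : n < 2 * k)
    (Z : Fin n → Fin n → ℕ) (hZ : ∀ i j, Z i j ≤ 1)
    (r c : Fin n → ℕ)
    (hr : ∀ i, r i = ∑ j, Z i j) (hc : ∀ j, c j = ∑ i, Z i j) :
    ((univ : Finset (Fin n × Fin n)).filter
      (fun p => (k : ℤ) ≤ |(r p.1 : ℤ) - (c p.2 : ℤ)|)).card ≤ 2 * k * (n - k) := by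
  classical
  have hk1 : 1 ≤ k := by omega
  have hρ : ∀ i, r i ≤ n := by
    intro i
    rw [hr i]
    calc ∑ j, Z i j ≤ ∑ _j : Fin n, 1 := Finset.sum_le_sum (fun j _ => hZ i j)
      _ = n := by simp
  have hγ : ∀ j, c j ≤ n := by
    intro j
    rw [hc j]
    calc ∑ i, Z i j ≤ ∑ _i : Fin n, 1 := Finset.sum_le_sum (fun i _ => hZ i j)
      _ = n := by simp
  have hcount₁ : ∀ R C : Finset (Fin n),
      (∑ i ∈ R, r i) ≤ (∑ j ∈ C, c j) + R.card * (n - C.card) := by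
    intro R C
    have expand : ∑ i ∈ R, r i
        = (∑ i ∈ R, ∑ j ∈ C, Z i j) + ∑ i ∈ R, ∑ j ∈ Cᶜ, Z i j := by
      rw [← Finset.sum_add_distrib]
      refine Finset.sum_congr rfl (fun i _ => ?_)
      rw [hr i, Finset.sum_add_sum_compl]
    rw [expand]
    have h1 : (∑ i ∈ R, ∑ j ∈ C, Z i j) ≤ ∑ j ∈ C, c j := by
      rw [Finset.sum_comm]
      refine Finset.sum_le_sum (fun j _ => ?_)
      rw [hc j]
      exact Finset.sum_le_sum_of_subset (Finset.subset_univ R)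
    have h2 : (∑ i ∈ R, ∑ j ∈ Cᶜ, Z i j) ≤ R.card * (n - C.card) := by
      calc ∑ i ∈ R, ∑ j ∈ Cᶜ, Z i j ≤ ∑ _i ∈ R, ∑ _j ∈ Cᶜ, 1 :=
            Finset.sum_le_sum (fun i _ => Finset.sum_le_sum (fun j _ => hZ i j))
        _ = R.card * Cᶜ.card := by simp [mul_comm]
        _ = R.card * (n - C.card) := by rw [Finset.card_compl, Fintype.card_fin]
    omega
  have hcount₂ : ∀ R C : Finset (Fin n),
      (∑ j ∈ R, c j) ≤ (∑ i ∈ C, r i) + R.card * (n - C.card) := by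
    intro R C
    have expand : ∑ j ∈ R, c j
        = (∑ j ∈ R, ∑ i ∈ C, Z i j) + ∑ j ∈ R, ∑ i ∈ Cᶜ, Z i j := by
      rw [← Finset.sum_add_distrib]
      refine Finset.sum_congr rfl (fun j _ => ?_)
      rw [hc j, Finset.sum_add_sum_compl]
    rw [expand]
    have h1 : (∑ j ∈ R, ∑ i ∈ C, Z i j) ≤ ∑ i ∈ C, r i := by
      rw [Finset.sum_comm]
      refine Finset.sum_le_sum (fun i _ => ?_)
      rw [hr i]
      exact Finset.sum_le_sum_of_subset (Finset.subset_univ R)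
    have h2 : (∑ j ∈ R, ∑ i ∈ Cᶜ, Z i j) ≤ R.card * (n - C.card) := by
      calc ∑ j ∈ R, ∑ i ∈ Cᶜ, Z i j ≤ ∑ _j ∈ R, ∑ _i ∈ Cᶜ, 1 :=
            Finset.sum_le_sum (fun j _ => Finset.sum_le_sum (fun i _ => hZ i j))
        _ = R.card * Cᶜ.card := by simp [mul_comm]
        _ = R.card * (n - C.card) := by rw [Finset.card_compl, Fintype.card_fin]
    omega
  obtain ⟨a, ha, ⟨Ma, hMacard, hMaIs⟩, hSa⟩ := mrc_oneSide k hk r c hρ hγ hcount₁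
  obtain ⟨b, hb, ⟨Mb, hMbcard, hMbIs⟩, hSb⟩ := mrc_oneSide k hk c r hγ hρ hcount₂
  have h₁ : (univ.filter (fun p : Fin n × Fin n => c p.2 + k ≤ r p.1)).card ≤ a * (n - b) :=
    hSa b Mb hMbcard hMbIs
  have h₂ : (univ.filter (fun p : Fin n × Fin n => r p.2 + k ≤ c p.1)).card ≤ b * (n - a) :=
    hSb a Ma hMacard hMaIs
  have hswap : (univ.filter (fun p : Fin n × Fin n => r p.1 + k ≤ c p.2)).card
      = (univ.filter (fun p : Fin n × Fin n => r p.2 + k ≤ c p.1)).card := by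
    apply Finset.card_bij' (fun p _ => Prod.swap p) (fun p _ => Prod.swap p)
    · intro p hp
      simp only [Finset.mem_filter, Finset.mem_univ, true_and] at hp ⊢
      exact hp
    · intro p hp
      simp only [Finset.mem_filter, Finset.mem_univ, true_and] at hp ⊢
      exact hp
    · intro p _; simp
    · intro p _; simp
  have hiff : ∀ p : Fin n × Fin n,
      ((k : ℤ) ≤ |(r p.1 : ℤ) - (c p.2 : ℤ)|) ↔ (c p.2 + k ≤ r p.1 ∨ r p.1 + k ≤ c p.2) := by
    intro p
    rw [le_abs]
    omega
  have hdisj : Disjoint (univ.filter (fun p : Fin n × Fin n => c p.2 + k ≤ r p.1))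
      (univ.filter (fun p : Fin n × Fin n => r p.1 + k ≤ c p.2)) := by
    rw [Finset.disjoint_left]
    intro p hp1 hp2
    have := (Finset.mem_filter.mp hp1).2
    have := (Finset.mem_filter.mp hp2).2
    omega
  have hsplit : ((univ : Finset (Fin n × Fin n)).filter
      (fun p => (k : ℤ) ≤ |(r p.1 : ℤ) - (c p.2 : ℤ)|)).card
      = (univ.filter (fun p : Fin n × Fin n => c p.2 + k ≤ r p.1)).card
        + (univ.filter (fun p : Fin n × Fin n => r p.1 + k ≤ c p.2)).card := by
    rw [Finset.filter_congr (fun p _ => hiff p), Finset.filter_or,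
      Finset.card_union_of_disjoint hdisj]
  rw [hsplit, hswap]
  have hfinal : a * (n - b) + b * (n - a) ≤ 2 * k * (n - k) := by
    have hbn : b ≤ n := by omega
    have han : a ≤ n := by omega
    zify [hbn, han, hkn]
    nlinarith [mul_nonneg (show (0:ℤ) ≤ (n:ℤ) - k - a by omega) (show (0:ℤ) ≤ 2*(k:ℤ) - n by omega),
      mul_nonneg (show (0:ℤ) ≤ (n:ℤ) - k - b by omega) (show (0:ℤ) ≤ 2*(k:ℤ) - n by omega),
      mul_nonneg (show (0:ℤ) ≤ (n:ℤ) - k - a by omega) (show (0:ℤ) ≤ (n:ℤ) - k - b by omega)]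
  omega
end

section
/- Let n ≥ 1 and k with n ≥ k > n/2, and let α, β : {1,…,n} → {0,…,n} be nonincreasing sequences. Suppose there exist s, t ∈ {1,…,n−k+1} with α_s ≤ β_{s+k−1} + k − 1 and β_t ≤ α_{t+k−1} + k − 1. Then the number of pairs (i, j) with |α_i − β_j| ≥ k is at most 2k(n−k). -/
open Finset

lemma count_lt (n s : ℕ) (h : s < n) : (univ.filter (fun i : Fin n => i.val < s)).card = s := by
  have : (univ.filter (fun i : Fin n => i.val < s)) = Iio ⟨s, h⟩ := by
    ext i; simp [Fin.lt_def]
  rw [this, Fin.card_Iio]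

lemma count_ge (n s : ℕ) (h : s < n) : (univ.filter (fun i : Fin n => s ≤ i.val)).card = n - s := by
  have : (univ.filter (fun i : Fin n => s ≤ i.val)) = Ici ⟨s, h⟩ := by
    ext i; simp [Fin.le_def]
  rw [this, Fin.card_Ici]
lemma keyA (n k : ℕ) (hn : 1 ≤ n) (hkn : k ≤ n) (hk : n < 2 * k)
    (α β : Fin n → ℕ) (hαn : ∀ i, α i ≤ n)
    (hα : Antitone α) (hβ : Antitone β)
    (s : ℕ) (hs : s + k ≤ n)
    (h1 : α ⟨s, by omega⟩ ≤ β ⟨s + k - 1, by omega⟩ + (k - 1)) :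
    (univ.filter (fun p : Fin n × Fin n => β p.2 + k ≤ α p.1)).card ≤
      min ((univ.filter (fun i : Fin n => k ≤ α i)).card * (n - (univ.filter (fun j : Fin n => k ≤ β j)).card))
          (s * (n - (univ.filter (fun j : Fin n => k ≤ β j)).card)
            + ((univ.filter (fun i : Fin n => k ≤ α i)).card - s) * (n - s - k)) := by
  have hk1 : 1 ≤ k := by omega
  set A := (univ.filter (fun i : Fin n => k ≤ α i)).card with hA
  set B := (univ.filter (fun j : Fin n => k ≤ β j)).card with hB
  have hBcompl : (univ.filter (fun j : Fin n => ¬ k ≤ β j)).card = n - B := by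
    have := Finset.card_filter_add_card_filter_not (s := (univ : Finset (Fin n)))
      (p := fun j : Fin n => k ≤ β j)
    simp only [Finset.card_univ, Fintype.card_fin] at this
    omega
  -- small β for any pair
  have hsmall : ∀ p : Fin n × Fin n, β p.2 + k ≤ α p.1 → ¬ k ≤ β p.2 := by
    intro p hp
    have := hαn p.1; omega
  have hbig : ∀ p : Fin n × Fin n, β p.2 + k ≤ α p.1 → k ≤ α p.1 := by
    intro p hp; omega
  refine le_min ?_ ?_
  · -- bound (i)
    calc (univ.filter (fun p : Fin n × Fin n => β p.2 + k ≤ α p.1)).card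
        ≤ ((univ.filter (fun i : Fin n => k ≤ α i)) ×ˢ (univ.filter (fun j : Fin n => ¬ k ≤ β j))).card := by
          apply Finset.card_le_card
          intro p hp
          simp only [Finset.mem_filter, Finset.mem_univ, true_and] at hp
          simp only [Finset.mem_product, Finset.mem_filter, Finset.mem_univ, true_and]
          exact ⟨hbig p hp, hsmall p hp⟩
      _ = A * (n - B) := by rw [Finset.card_product, hBcompl]
  · -- bound (ii)
    have hstruct : ∀ p : Fin n × Fin n, β p.2 + k ≤ α p.1 → s ≤ p.1.val → s + k ≤ p.2.val := by
      intro p hp hsp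
      by_contra hj
      push_neg at hj
      have h1' : α p.1 ≤ α ⟨s, by omega⟩ := hα (by simp [Fin.le_def]; omega)
      have h2' : β ⟨s + k - 1, by omega⟩ ≤ β p.2 := hβ (by simp [Fin.le_def]; omega)
      omega
    set T1 := (univ.filter (fun i : Fin n => i.val < s)) ×ˢ (univ.filter (fun j : Fin n => ¬ k ≤ β j)) with hT1
    set T2 := (univ.filter (fun i : Fin n => s ≤ i.val ∧ k ≤ α i)) ×ˢ (univ.filter (fun j : Fin n => s + k ≤ j.val)) with hT2
    have hsub : (univ.filter (fun p : Fin n × Fin n => β p.2 + k ≤ α p.1)) ⊆ T1 ∪ T2 := by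
      intro p hp
      simp only [Finset.mem_filter, Finset.mem_univ, true_and] at hp
      rcases lt_or_ge p.1.val s with h | h
      · apply Finset.mem_union_left
        simp only [hT1, Finset.mem_product, Finset.mem_filter, Finset.mem_univ, true_and]
        exact ⟨h, hsmall p hp⟩
      · apply Finset.mem_union_right
        simp only [hT2, Finset.mem_product, Finset.mem_filter, Finset.mem_univ, true_and]
        exact ⟨⟨h, hbig p hp⟩, hstruct p hp h⟩
    have hc1 : T1.card = s * (n - B) := by
      rw [hT1, Finset.card_product, count_lt n s (by omega), hBcompl]
    have hc2 : T2.card ≤ (A - s) * (n - s - k) := by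
      rw [hT2, Finset.card_product]
      rcases Nat.eq_zero_or_pos (univ.filter (fun i : Fin n => s ≤ i.val ∧ k ≤ α i)).card with h0 | h0
      · rw [h0]; simp
      · obtain ⟨i0, hi0⟩ := Finset.card_pos.mp h0
        simp only [Finset.mem_filter, Finset.mem_univ, true_and] at hi0
        have hsplit : (univ.filter (fun i : Fin n => i.val < s)).card
            + (univ.filter (fun i : Fin n => s ≤ i.val ∧ k ≤ α i)).card ≤ A := by
          rw [hA, ← Finset.card_union_of_disjoint]
          · apply Finset.card_le_card
            intro i hi
            simp only [Finset.mem_union, Finset.mem_filter, Finset.mem_univ, true_and] at hi ⊢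
            rcases hi with h | h
            · exact le_trans hi0.2 (hα (Fin.le_def.mpr (by omega)))
            · exact h.2
          · apply Finset.disjoint_left.mpr
            intro i hi hi2
            simp only [Finset.mem_filter, Finset.mem_univ, true_and] at hi hi2
            omega
        rw [count_lt n s (by omega)] at hsplit
        have hj : (univ.filter (fun j : Fin n => s + k ≤ j.val)).card = n - s - k := by
          rcases Nat.lt_or_ge (s+k) n with h | h
          · rw [count_ge n (s+k) h]; omega
          · have : s + k = n := by omega
            rw [this]
            have : (univ.filter (fun j : Fin n => n ≤ j.val)) = ∅ := by
              apply Finset.filter_false_of_mem; intro j _; omega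
            rw [this]; simp; omega
        rw [hj]
        exact Nat.mul_le_mul_right _ (by omega)
    calc (univ.filter (fun p : Fin n × Fin n => β p.2 + k ≤ α p.1)).card
        ≤ (T1 ∪ T2).card := Finset.card_le_card hsub
      _ ≤ T1.card + T2.card := Finset.card_union_le _ _
      _ ≤ s * (n - B) + (A - s) * (n - s - k) := by rw [hc1]; omega
set_option maxHeartbeats 2000000 in
lemma arithZ (n k s t a b : ℤ) (hk1 : 1 ≤ k) (hkn : k ≤ n) (hk : n < 2 * k)
    (hs0 : 0 ≤ s) (hs : s + k ≤ n) (ht0 : 0 ≤ t) (ht : t + k ≤ n)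
    (ha0 : 0 ≤ a) (ha : a ≤ n) (hb0 : 0 ≤ b) (hb : b ≤ n)
    (hau : n - k < a) (hbu : n - k < b) :
    min (a * (n - b)) (s * (n - b) + (a - s) * (n - s - k))
      + min (b * (n - a)) (t * (n - a) + (b - t) * (n - t - k)) ≤ 2 * k * (n - k) := by
  rcases le_total (a * (n - b)) (s * (n - b) + (a - s) * (n - s - k)) with hA | hA <;>
    rcases le_total (b * (n - a)) (t * (n - a) + (b - t) * (n - t - k)) with hB | hB
  · -- arm1, arm1 : derive n-b ≤ (n-k)-s and n-a ≤ (n-k)-t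
    rw [min_eq_left hA, min_eq_left hB]
    have f1 : n - b ≤ (n - k) - s := by
      have key : (a - s) * (n - b) ≤ (a - s) * (n - s - k) := by nlinarith [hA]
      have := le_of_mul_le_mul_left key (show (0:ℤ) < a - s by linarith)
      linarith
    have f2 : n - a ≤ (n - k) - t := by
      have key : (b - t) * (n - a) ≤ (b - t) * (n - t - k) := by nlinarith [hB]
      have := le_of_mul_le_mul_left key (show (0:ℤ) < b - t by linarith)
      linarith
    nlinarith [mul_nonneg (by linarith : (0:ℤ) ≤ 2*b - n) (by linarith : (0:ℤ) ≤ (n-k) - t - (n - a)),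
               mul_nonneg (by linarith : (0:ℤ) ≤ 2*k - n + 2*t) (by linarith : (0:ℤ) ≤ (n-k) - s - (n - b)),
               mul_nonneg (by linarith : (0:ℤ) ≤ s + t) (by linarith : (0:ℤ) ≤ 2*k - n),
               mul_nonneg hs0 ht0]
  · -- arm1 A, arm2 B : n-b ≤ (n-k)-s, and (n-k)-t ≤ n-a
    rw [min_eq_left hA, min_eq_right hB]
    have f1 : n - b ≤ (n - k) - s := by
      have key : (a - s) * (n - b) ≤ (a - s) * (n - s - k) := by nlinarith [hA]
      have := le_of_mul_le_mul_left key (show (0:ℤ) < a - s by linarith)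
      linarith
    have f2 : (n - k) - t ≤ n - a := by
      have key : (b - t) * (n - t - k) ≤ (b - t) * (n - a) := by nlinarith [hB]
      have := le_of_mul_le_mul_left key (show (0:ℤ) < b - t by linarith)
      linarith
    have hP0 : (0:ℤ) ≤ (b - (k+s)) * (a - ((n-k)-t)) :=
      mul_nonneg (by linarith) (by linarith)
    rcases le_total (s + t) (n - k) with h | h
    · nlinarith [hP0, mul_nonneg (by linarith : (0:ℤ) ≤ (k+t) - a) (by linarith : (0:ℤ) ≤ (n-k) - s - t),
                 mul_nonneg (by linarith : (0:ℤ) ≤ s + t) (by linarith : (0:ℤ) ≤ 2*k - n),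
                 mul_nonneg hs0 ht0]
    · nlinarith [hP0, mul_nonneg (by linarith : (0:ℤ) ≤ a - ((n-k)+1)) (by linarith : (0:ℤ) ≤ s + t - (n-k)),
                 mul_nonneg (by linarith : (0:ℤ) ≤ n - k) (by linarith : (0:ℤ) ≤ 2*k - n - 1),
                 mul_nonneg ht0 (by linarith : (0:ℤ) ≤ (n-k) + 1 - t),
                 mul_nonneg hs0 ht0]
  · -- arm2 A, arm1 B : symmetric
    rw [min_eq_right hA, min_eq_left hB]
    have f1 : (n - k) - s ≤ n - b := by
      have key : (a - s) * (n - s - k) ≤ (a - s) * (n - b) := by nlinarith [hA]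
      have := le_of_mul_le_mul_left key (show (0:ℤ) < a - s by linarith)
      linarith
    have f2 : n - a ≤ (n - k) - t := by
      have key : (b - t) * (n - a) ≤ (b - t) * (n - t - k) := by nlinarith [hB]
      have := le_of_mul_le_mul_left key (show (0:ℤ) < b - t by linarith)
      linarith
    have hP0 : (0:ℤ) ≤ (a - (k+t)) * (b - ((n-k)-s)) :=
      mul_nonneg (by linarith) (by linarith)
    rcases le_total (s + t) (n - k) with h | h
    · nlinarith [hP0, mul_nonneg (by linarith : (0:ℤ) ≤ (k+s) - b) (by linarith : (0:ℤ) ≤ (n-k) - s - t),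
                 mul_nonneg (by linarith : (0:ℤ) ≤ s + t) (by linarith : (0:ℤ) ≤ 2*k - n),
                 mul_nonneg hs0 ht0]
    · nlinarith [hP0, mul_nonneg (by linarith : (0:ℤ) ≤ b - ((n-k)+1)) (by linarith : (0:ℤ) ≤ s + t - (n-k)),
                 mul_nonneg (by linarith : (0:ℤ) ≤ n - k) (by linarith : (0:ℤ) ≤ 2*k - n - 1),
                 mul_nonneg hs0 (by linarith : (0:ℤ) ≤ (n-k) + 1 - s),
                 mul_nonneg hs0 ht0]
  · -- arm2, arm2
    rw [min_eq_right hA, min_eq_right hB]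
    have f1 : (n - k) - s ≤ n - b := by
      have key : (a - s) * (n - s - k) ≤ (a - s) * (n - b) := by nlinarith [hA]
      have := le_of_mul_le_mul_left key (show (0:ℤ) < a - s by linarith)
      linarith
    have f2 : (n - k) - t ≤ n - a := by
      have key : (b - t) * (n - t - k) ≤ (b - t) * (n - a) := by nlinarith [hB]
      have := le_of_mul_le_mul_left key (show (0:ℤ) < b - t by linarith)
      linarith
    nlinarith [mul_nonneg (by linarith : (0:ℤ) ≤ k + t - a) (by linarith : (0:ℤ) ≤ (n-k) - s),
               mul_nonneg (by linarith : (0:ℤ) ≤ k + s - b) (by linarith : (0:ℤ) ≤ (n-k) - t),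
               mul_nonneg (by linarith : (0:ℤ) ≤ s + t) (by linarith : (0:ℤ) ≤ 2*k - n),
               mul_nonneg hs0 ht0]

lemma arithN (n k s t a b : ℕ) (hkn : k ≤ n) (hk : n < 2 * k)
    (hs : s + k ≤ n) (ht : t + k ≤ n) (ha : a ≤ n) (hb : b ≤ n) :
    min (a * (n - b)) (s * (n - b) + (a - s) * (n - s - k))
      + min (b * (n - a)) (t * (n - a) + (b - t) * (n - t - k)) ≤ 2 * k * (n - k) := by
  rcases le_or_gt a (n - k) with hau | hau <;> rcases le_or_gt b (n - k) with hbu | hbu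
  · -- both small
    have key : a * (n - b) + b * (n - a) ≤ 2 * k * (n - k) := by
      zify [ha, hb, hkn]
      have h1 : (a:ℤ) ≤ (n:ℤ) - k := by omega
      have h2 : (b:ℤ) ≤ (n:ℤ) - k := by omega
      nlinarith [mul_nonneg (sub_nonneg.mpr h1) (by omega : (0:ℤ) ≤ (n:ℤ) - 2*b),
                 mul_nonneg (sub_nonneg.mpr h2) (by omega : (0:ℤ) ≤ 2*(k:ℤ) - n)]
    calc _ ≤ a * (n - b) + b * (n - a) := add_le_add (min_le_left _ _) (min_le_left _ _)
      _ ≤ _ := key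
  · -- a small, b large
    have key : a * (n - b) + (t * (n - a) + (b - t) * (n - t - k)) ≤ 2 * k * (n - k) := by
      zify [ha, hb, hkn, show t ≤ b by omega, show t ≤ n by omega, show k ≤ n - t by omega]
      have h1 : (a:ℤ) ≤ (n:ℤ) - k := by omega
      have h2 : (n:ℤ) - k < b := by omega
      have h5 : (t:ℤ) ≤ (n:ℤ) - k := by omega
      rcases le_total ((t:ℤ)) ((n:ℤ) - b) with h | h
      · nlinarith [mul_nonneg (by omega : (0:ℤ) ≤ (n:ℤ)-k-a) (by linarith : (0:ℤ) ≤ (n:ℤ)-b-t),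
                   mul_nonneg (by omega : (0:ℤ) ≤ (t:ℤ)) (by omega : (0:ℤ) ≤ (b:ℤ)-((n:ℤ)-k)),
                   mul_nonneg (by omega : (0:ℤ) ≤ (n:ℤ)-k-t) (by omega : (0:ℤ) ≤ (t:ℤ)+2*k-n)]
      · nlinarith [mul_nonneg (by omega : (0:ℤ) ≤ (a:ℤ)) (by linarith : (0:ℤ) ≤ (t:ℤ)-((n:ℤ)-b)),
                   mul_nonneg (by omega : (0:ℤ) ≤ (n:ℤ)-b) (by omega : (0:ℤ) ≤ (n:ℤ)-k-t),
                   mul_nonneg (by omega : (0:ℤ) ≤ (t:ℤ)) (by omega : (0:ℤ) ≤ (n:ℤ)-k-t),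
                   mul_nonneg (by omega : (0:ℤ) ≤ (n:ℤ)-k) (by omega : (0:ℤ) ≤ 2*(k:ℤ)-n)]
    calc _ ≤ a * (n - b) + (t * (n - a) + (b - t) * (n - t - k)) :=
          add_le_add (min_le_left _ _) (min_le_right _ _)
      _ ≤ _ := key
  · -- a large, b small
    have key : (s * (n - b) + (a - s) * (n - s - k)) + b * (n - a) ≤ 2 * k * (n - k) := by
      zify [ha, hb, hkn, show s ≤ a by omega, show s ≤ n by omega, show k ≤ n - s by omega]
      have h1 : (b:ℤ) ≤ (n:ℤ) - k := by omega
      have h2 : (n:ℤ) - k < a := by omega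
      have h5 : (s:ℤ) ≤ (n:ℤ) - k := by omega
      rcases le_total ((s:ℤ)) ((n:ℤ) - a) with h | h
      · nlinarith [mul_nonneg (by omega : (0:ℤ) ≤ (n:ℤ)-k-b) (by linarith : (0:ℤ) ≤ (n:ℤ)-a-s),
                   mul_nonneg (by omega : (0:ℤ) ≤ (s:ℤ)) (by omega : (0:ℤ) ≤ (a:ℤ)-((n:ℤ)-k)),
                   mul_nonneg (by omega : (0:ℤ) ≤ (n:ℤ)-k-s) (by omega : (0:ℤ) ≤ (s:ℤ)+2*k-n)]
      · nlinarith [mul_nonneg (by omega : (0:ℤ) ≤ (b:ℤ)) (by linarith : (0:ℤ) ≤ (s:ℤ)-((n:ℤ)-a)),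
                   mul_nonneg (by omega : (0:ℤ) ≤ (n:ℤ)-a) (by omega : (0:ℤ) ≤ (n:ℤ)-k-s),
                   mul_nonneg (by omega : (0:ℤ) ≤ (s:ℤ)) (by omega : (0:ℤ) ≤ (n:ℤ)-k-s),
                   mul_nonneg (by omega : (0:ℤ) ≤ (n:ℤ)-k) (by omega : (0:ℤ) ≤ 2*(k:ℤ)-n)]
    calc _ ≤ (s * (n - b) + (a - s) * (n - s - k)) + b * (n - a) :=
          add_le_add (min_le_right _ _) (min_le_left _ _)
      _ ≤ _ := key
  · -- both large: use arithZ
    have hZ := arithZ (n:ℤ) k s t a b (by omega) (by omega) (by omega) (by omega)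
      (by omega) (by omega) (by omega) (by omega) (by omega) (by omega) (by omega) (by omega) (by omega)
    zify [ha, hb, hkn, show s ≤ a by omega, show t ≤ b by omega,
      show s ≤ n by omega, show t ≤ n by omega,
      show k ≤ n - s by omega, show k ≤ n - t by omega]
    convert hZ using 3 <;> ring

theorem pair_count_bound_of_spread (n k : ℕ) (hn : 1 ≤ n) (hkn : k ≤ n) (hk : n < 2 * k)
    (α β : Fin n → ℕ) (hαn : ∀ i, α i ≤ n) (hβn : ∀ i, β i ≤ n)
    (hα : Antitone α) (hβ : Antitone β)
    (s t : ℕ) (hs : s + k ≤ n) (ht : t + k ≤ n)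
    (h1 : α ⟨s, by omega⟩ ≤ β ⟨s + k - 1, by omega⟩ + (k - 1))
    (h2 : β ⟨t, by omega⟩ ≤ α ⟨t + k - 1, by omega⟩ + (k - 1)) :
    ((univ : Finset (Fin n × Fin n)).filter
      (fun p => (k : ℤ) ≤ |(α p.1 : ℤ) - (β p.2 : ℤ)|)).card ≤ 2 * k * (n - k) := by
  classical
  have hk1 : 1 ≤ k := by omega
  set SA := univ.filter (fun p : Fin n × Fin n => β p.2 + k ≤ α p.1) with hSA
  set SB := univ.filter (fun p : Fin n × Fin n => α p.1 + k ≤ β p.2) with hSB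
  have hsub : ((univ : Finset (Fin n × Fin n)).filter
      (fun p => (k : ℤ) ≤ |(α p.1 : ℤ) - (β p.2 : ℤ)|)) ⊆ SA ∪ SB := by
    intro p hp
    simp only [hSA, hSB, Finset.mem_filter, Finset.mem_univ, true_and, Finset.mem_union] at hp ⊢
    rcases abs_cases ((α p.1 : ℤ) - (β p.2 : ℤ)) with ⟨he, _⟩ | ⟨he, _⟩
    · left; omega
    · right; omega
  have hswap : SB.card = (univ.filter (fun p : Fin n × Fin n => α p.2 + k ≤ β p.1)).card := by
    rw [hSB]
    apply Finset.card_bij' (fun p _ => Prod.swap p) (fun p _ => Prod.swap p)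
    · intro p hp; simp only [Finset.mem_filter, Finset.mem_univ, true_and] at hp ⊢; exact hp
    · intro p hp; simp only [Finset.mem_filter, Finset.mem_univ, true_and] at hp ⊢; exact hp
    · intro p _; simp
    · intro p _; simp
  have bA := keyA n k hn hkn hk α β hαn hα hβ s hs h1
  have bB := keyA n k hn hkn hk β α hβn hβ hα t ht h2
  have han : (univ.filter (fun i : Fin n => k ≤ α i)).card ≤ n :=
    le_trans (Finset.card_filter_le _ _) (by simp)
  have hbn : (univ.filter (fun j : Fin n => k ≤ β j)).card ≤ n :=
    le_trans (Finset.card_filter_le _ _) (by simp)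
  calc ((univ : Finset (Fin n × Fin n)).filter
      (fun p => (k : ℤ) ≤ |(α p.1 : ℤ) - (β p.2 : ℤ)|)).card
      ≤ (SA ∪ SB).card := Finset.card_le_card hsub
    _ ≤ SA.card + SB.card := Finset.card_union_le _ _
    _ ≤ _ := by
        rw [hswap]
        refine le_trans (add_le_add bA bB) ?_
        exact arithN n k s t _ _ hkn hk hs ht han hbn
end

section
/- Let p_1,…,p_N, q_1,…,q_M be nonnegative reals summing to 1 each, and let ρ ∈ [0,1]^{N×M}. Define x_i = Σ_j q_j ρ_{i,j} and y_j = Σ_i p_i ρ_{i,j}. Then for every δ ∈ (1/2, 1], Σ_{i,j} 1{|x_i − y_j| ≥ δ} · p_i q_j ≤ 2δ(1−δ). -/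
set_option maxHeartbeats 1000000
open Finset

lemma onehump {θ D u h β s : ℝ} (hh0 : 0 ≤ h) (hhθ : h ≤ θ) (hhu : h*u ≤ D)
    (hu : 0 ≤ u) (hβ : 0 ≤ β) (hs : 0 ≤ s) (hD : 0 ≤ D)
    (hbr : θ ≤ β ∨ (D ≤ β*θ ∧ θ*(θ-β) ≤ s*(θ*θ-D) ∧ D < θ*θ ∧ β ≤ θ)) :
    h ≤ β + s * max 0 (θ - u) := by
  have hmax : (0:ℝ) ≤ s * max 0 (θ - u) := mul_nonneg hs (le_max_left _ _)
  rcases hbr with hb | ⟨h1, h2, h3, h4⟩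
  · linarith
  · have hθ0 : 0 ≤ θ := le_trans hh0 hhθ
    rcases le_or_gt θ u with hcase | hcase
    · rcases lt_or_ge 0 u with hu0 | hu0
      · nlinarith
      · nlinarith
    · have hmx : max 0 (θ - u) = θ - u := max_eq_right (by linarith)
      rw [hmx]
      have key : 0 ≤ β*(θ*θ-D) + θ*(θ-β)*(θ-u) - h*(θ*θ-D) := by
        rcases le_or_gt h β with hc | hc
        · nlinarith [mul_le_mul_of_nonneg_right (mul_le_mul_of_nonneg_left hcase.le hθ0) (sub_nonneg.2 h4),
            mul_le_mul_of_nonneg_right h1 (sub_nonneg.2 hc),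
            mul_nonneg (mul_nonneg hθ0 (sub_nonneg.2 hc)) (sub_nonneg.2 h4)]
        · have hsum : 0 ≤ θ + h - β := by linarith
          have hq : 0 ≤ θ*θ - u*(θ+h-β) := by
            nlinarith [mul_le_mul_of_nonneg_right hhu hsum,
              mul_le_mul_of_nonneg_right h1 hsum,
              mul_nonneg (mul_nonneg hθ0 (sub_nonneg.2 h4)) (sub_nonneg.2 hc.le)]
          nlinarith [mul_nonneg (sub_nonneg.2 hhθ) hq,
            mul_le_mul_of_nonneg_right hhu (sub_nonneg.2 hc.le)]
      nlinarith [mul_le_mul_of_nonneg_right h2 (le_of_lt (sub_pos.2 hcase))]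

theorem discrete_burdzy_pitman {N M : ℕ}
    (p : Fin N → ℝ) (q : Fin M → ℝ)
    (hp : ∀ i, 0 ≤ p i) (hq : ∀ j, 0 ≤ q j)
    (hp1 : ∑ i, p i = 1) (hq1 : ∑ j, q j = 1)
    (ρ : Fin N → Fin M → ℝ) (hρ0 : ∀ i j, 0 ≤ ρ i j) (hρ1 : ∀ i j, ρ i j ≤ 1)
    (x : Fin N → ℝ) (y : Fin M → ℝ)
    (hx : ∀ i, x i = ∑ j, q j * ρ i j) (hy : ∀ j, y j = ∑ i, p i * ρ i j)
    (δ : ℝ) (hδ1 : 1 / 2 < δ) (hδ2 : δ ≤ 1) :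
    ∑ i : Fin N, ∑ j : Fin M, (if δ ≤ |x i - y j| then p i * q j else 0)
      ≤ 2 * δ * (1 - δ) := by
  classical
  set c : ℝ := 1 - δ with hcdef
  have hc0 : 0 ≤ c := by simp only [hcdef]; linarith
  have hc2 : 2*c ≤ 1 := by simp only [hcdef]; linarith
  have hcδ : c < δ := by simp only [hcdef]; linarith
  -- bounds on x and y
  have hy0 : ∀ j, 0 ≤ y j := fun j => by
    rw [hy]; exact sum_nonneg fun i _ => mul_nonneg (hp i) (hρ0 i j)
  have hy1 : ∀ j, y j ≤ 1 := fun j => by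
    rw [hy, ← hp1]
    exact sum_le_sum fun i _ => by
      have := hρ1 i j; have := hp i; nlinarith
  have hx0 : ∀ i, 0 ≤ x i := fun i => by
    rw [hx]; exact sum_nonneg fun j _ => mul_nonneg (hq j) (hρ0 i j)
  have hx1 : ∀ i, x i ≤ 1 := fun i => by
    rw [hx, ← hq1]
    exact sum_le_sum fun j _ => by
      have := hρ1 i j; have := hq j; nlinarith
  -- Y-side scalar data
  set Bl : Finset (Fin M) := univ.filter (fun j => y j ≤ c) with hBl
  set Bh : Finset (Fin M) := univ.filter (fun j => δ ≤ y j) with hBh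
  set b : ℝ := ∑ j ∈ Bl, q j with hbdef
  set W : ℝ := ∑ j ∈ Bl, q j * y j with hWdef
  set g : ℝ := ∑ j ∈ Bh, q j with hgdef
  set K2 : ℝ := ∑ j ∈ Bh, q j * (1 - y j) with hK2def
  set D1 : ℝ := ∑ j ∈ Bl, q j * (c - y j) with hD1def
  set D2 : ℝ := ∑ j ∈ Bh, q j * (y j - δ) with hD2def
  have hb0 : 0 ≤ b := sum_nonneg fun j _ => hq j
  have hg0 : 0 ≤ g := sum_nonneg fun j _ => hq j
  have hW0 : 0 ≤ W := sum_nonneg fun j hj => mul_nonneg (hq j) (hy0 j)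
  have hD1nn : 0 ≤ D1 := sum_nonneg fun j hj => by
    have := (mem_filter.1 hj).2
    exact mul_nonneg (hq j) (by linarith)
  have hD2nn : 0 ≤ D2 := sum_nonneg fun j hj => by
    have := (mem_filter.1 hj).2
    exact mul_nonneg (hq j) (by linarith)
  have hK2nn : 0 ≤ K2 := sum_nonneg fun j hj => mul_nonneg (hq j) (by linarith [hy1 j])
  have hD1id : D1 = c*b - W := by
    rw [hD1def, hbdef, hWdef, mul_sum, ← sum_sub_distrib]
    exact sum_congr rfl fun j _ => by ring
  have hD2id : D2 = c*g - K2 := by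
    rw [hD2def, hgdef, hK2def, mul_sum, ← sum_sub_distrib]
    exact sum_congr rfl fun j _ => by
      have : y j - δ = c * 1 - (1 - y j) := by rw [hcdef]; ring
      rw [this]; ring
  have hdisj : Disjoint Bl Bh := by
    rw [Finset.disjoint_left]
    intro j hj1 hj2
    have h1 := (mem_filter.1 hj1).2
    have h2 := (mem_filter.1 hj2).2
    linarith
  have hbg : b + g ≤ 1 := by
    rw [hbdef, hgdef, ← sum_union hdisj, ← hq1]
    exact sum_le_sum_of_subset_of_nonneg (subset_univ _) (fun j _ _ => hq j)
  have hWcb : W ≤ c*b := by linarith [hD1nn, hD1id]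
  have hK2cg : K2 ≤ c*g := by linarith [hD2nn, hD2id]
  -- per-row data
  set G : Fin N → ℝ := fun i => ∑ j ∈ univ.filter (fun j => y j ≤ x i - δ), q j with hGdef
  set H : Fin N → ℝ := fun i => ∑ j ∈ univ.filter (fun j => x i + δ ≤ y j), q j with hHdef
  set t : Fin N → ℝ := fun i => ∑ j ∈ Bl, q j * ρ i j with htdef
  set s : Fin N → ℝ := fun i => ∑ j ∈ Bh, q j * (1 - ρ i j) with hsdef
  have hG0 : ∀ i, 0 ≤ G i := fun i => sum_nonneg fun j _ => hq j
  have hH0 : ∀ i, 0 ≤ H i := fun i => sum_nonneg fun j _ => hq j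
  have ht0 : ∀ i, 0 ≤ t i := fun i => sum_nonneg fun j _ => mul_nonneg (hq j) (hρ0 i j)
  have hs0 : ∀ i, 0 ≤ s i := fun i => sum_nonneg fun j _ => mul_nonneg (hq j) (by linarith [hρ1 i j])
  have hGb : ∀ i, G i ≤ b := fun i => by
    apply sum_le_sum_of_subset_of_nonneg
    · intro j hj
      rw [mem_filter] at hj ⊢
      refine ⟨hj.1, ?_⟩
      have := hj.2; have := hx1 i
      rw [hcdef]; linarith
    · exact fun j _ _ => hq j
  have hHg : ∀ i, H i ≤ g := fun i => by
    apply sum_le_sum_of_subset_of_nonneg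
    · intro j hj
      rw [mem_filter] at hj ⊢
      refine ⟨hj.1, ?_⟩
      have := hj.2; have := hx0 i
      linarith
    · exact fun j _ _ => hq j
  have hGD : ∀ i, G i * (1 - x i) ≤ D1 := fun i => by
    rw [hGdef, sum_mul]
    calc ∑ j ∈ univ.filter (fun j => y j ≤ x i - δ), q j * (1 - x i)
        ≤ ∑ j ∈ univ.filter (fun j => y j ≤ x i - δ), q j * (c - y j) := by
          apply sum_le_sum
          intro j hj
          have := (mem_filter.1 hj).2
          apply mul_le_mul_of_nonneg_left _ (hq j)
          rw [hcdef]; linarith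
      _ ≤ D1 := by
          apply sum_le_sum_of_subset_of_nonneg
          · intro j hj
            rw [mem_filter] at hj ⊢
            refine ⟨hj.1, ?_⟩
            have := hj.2; have := hx1 i
            rw [hcdef]; linarith
          · intro j hj _
            have := (mem_filter.1 hj).2
            exact mul_nonneg (hq j) (by linarith)
  have hHD : ∀ i, H i * x i ≤ D2 := fun i => by
    rw [hHdef, sum_mul]
    calc ∑ j ∈ univ.filter (fun j => x i + δ ≤ y j), q j * x i
        ≤ ∑ j ∈ univ.filter (fun j => x i + δ ≤ y j), q j * (y j - δ) := by
          apply sum_le_sum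
          intro j hj
          have := (mem_filter.1 hj).2
          exact mul_le_mul_of_nonneg_left (by linarith) (hq j)
      _ ≤ D2 := by
          apply sum_le_sum_of_subset_of_nonneg
          · intro j hj
            rw [mem_filter] at hj ⊢
            refine ⟨hj.1, ?_⟩
            have := hj.2; have := hx0 i
            linarith
          · intro j hj _
            have := (mem_filter.1 hj).2
            exact mul_nonneg (hq j) (by linarith)
  have hcomplq : ∑ j ∈ univ.filter (fun j => ¬ y j ≤ c), q j = 1 - b := by
    have := sum_filter_add_sum_filter_not univ (fun j => y j ≤ c) q
    rw [hbdef]; rw [hq1] at this; linarith [this]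
  have htb : ∀ i, x i - (1 - b) ≤ t i := fun i => by
    have hsplit := sum_filter_add_sum_filter_not univ (fun j => y j ≤ c) (fun j => q j * ρ i j)
    have hrest : ∑ j ∈ univ.filter (fun j => ¬ y j ≤ c), q j * ρ i j ≤ 1 - b := by
      rw [← hcomplq]
      exact sum_le_sum fun j _ => by
        have := hρ1 i j; have := hq j; nlinarith
    have hxid : x i = ∑ j ∈ univ.filter (fun j => y j ≤ c), q j * ρ i j
        + ∑ j ∈ univ.filter (fun j => ¬ y j ≤ c), q j * ρ i j := by
      rw [hsplit, hx]
    rw [htdef]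
    simp only [hBl]
    linarith [hxid, hrest]
  have hsg : ∀ i, g - x i ≤ s i := fun i => by
    have h1 : ∑ j ∈ Bh, q j * ρ i j ≤ x i := by
      rw [hx]
      apply sum_le_sum_of_subset_of_nonneg (subset_univ _)
      exact fun j _ _ => mul_nonneg (hq j) (hρ0 i j)
    have h2 : s i = g - ∑ j ∈ Bh, q j * ρ i j := by
      rw [hsdef, hgdef, ← sum_sub_distrib]
      exact sum_congr rfl fun j _ => by ring
    linarith
  have hsumt : ∑ i, p i * t i = W := by
    rw [hWdef]
    calc ∑ i, p i * t i = ∑ i, ∑ j ∈ Bl, p i * (q j * ρ i j) := by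
          refine sum_congr rfl fun i _ => ?_
          simp only [htdef]
          rw [mul_sum]
      _ = ∑ j ∈ Bl, ∑ i, p i * (q j * ρ i j) := sum_comm
      _ = ∑ j ∈ Bl, q j * y j := by
          refine sum_congr rfl fun j _ => ?_
          rw [hy j, mul_sum]
          exact sum_congr rfl fun i _ => by ring
  have hsums : ∑ i, p i * s i = K2 := by
    rw [hK2def]
    calc ∑ i, p i * s i = ∑ i, ∑ j ∈ Bh, p i * (q j * (1 - ρ i j)) := by
          refine sum_congr rfl fun i _ => ?_
          simp only [hsdef]
          rw [mul_sum]
      _ = ∑ j ∈ Bh, ∑ i, p i * (q j * (1 - ρ i j)) := sum_comm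
      _ = ∑ j ∈ Bh, q j * (1 - y j) := by
          refine sum_congr rfl fun j _ => ?_
          have hid : ∑ i, p i * (q j * (1 - ρ i j))
              = q j * (∑ i, p i) - q j * ∑ i, p i * ρ i j := by
            rw [mul_sum, mul_sum, ← sum_sub_distrib]
            exact sum_congr rfl fun i _ => by ring
          rw [hid, hp1, hy j]
          ring
  clear_value c Bl Bh b W g K2 D1 D2 G H t s
  have hδc : δ = 1 - c := by rw [hcdef]; ring
  -- reduction of LHS
  have hred : ∑ i : Fin N, ∑ j : Fin M, (if δ ≤ |x i - y j| then p i * q j else 0)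
      ≤ ∑ i, p i * (G i + H i) := by
    apply sum_le_sum
    intro i _
    have h1 : ∑ j : Fin M, (if δ ≤ |x i - y j| then p i * q j else 0)
        = p i * ∑ j : Fin M, (if δ ≤ |x i - y j| then q j else 0) := by
      rw [mul_sum]
      exact sum_congr rfl fun j _ => by split <;> ring
    rw [h1]
    apply mul_le_mul_of_nonneg_left _ (hp i)
    have h2 : ∑ j : Fin M, (if δ ≤ |x i - y j| then q j else 0)
        ≤ ∑ j : Fin M, ((if y j ≤ x i - δ then q j else 0) + (if x i + δ ≤ y j then q j else 0)) := by
      apply sum_le_sum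
      intro j _
      have hq0 := hq j
      by_cases hcnd : δ ≤ |x i - y j|
      · rw [if_pos hcnd]
        rcases abs_cases (x i - y j) with ⟨heq, _⟩ | ⟨heq, _⟩
        · have hy' : y j ≤ x i - δ := by rw [heq] at hcnd; linarith
          rw [if_pos hy']
          have : (0:ℝ) ≤ (if x i + δ ≤ y j then q j else 0) := by split <;> simp [hq0]
          linarith
        · have hy' : x i + δ ≤ y j := by rw [heq] at hcnd; linarith
          rw [if_pos hy']
          have : (0:ℝ) ≤ (if y j ≤ x i - δ then q j else 0) := by split <;> simp [hq0]
          linarith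
      · rw [if_neg hcnd]
        have h3 : (0:ℝ) ≤ (if y j ≤ x i - δ then q j else 0) := by split <;> simp [hq0]
        have h4 : (0:ℝ) ≤ (if x i + δ ≤ y j then q j else 0) := by split <;> simp [hq0]
        linarith
    calc ∑ j : Fin M, (if δ ≤ |x i - y j| then q j else 0)
        ≤ ∑ j : Fin M, ((if y j ≤ x i - δ then q j else 0) + (if x i + δ ≤ y j then q j else 0)) := h2
      _ = G i + H i := by
          rw [sum_add_distrib]
          simp only [hGdef, hHdef]
          rw [sum_filter, sum_filter]
  -- certificate suffices
  suffices hcert : ∃ β lam rho : ℝ, 0 ≤ β ∧ 0 ≤ lam ∧ 0 ≤ rho ∧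
      (∀ i, δ ≤ x i → G i ≤ β + lam * max 0 (b - (1 - x i))) ∧
      (∀ i, x i < δ → H i ≤ β + rho * max 0 (g - x i)) ∧
      β + lam * W + rho * K2 ≤ 2 * δ * c by
    obtain ⟨β, lam, rho, hβ0, hlam0, hrho0, hHigh, hLow, hfin⟩ := hcert
    have hpoint : ∀ i, G i + H i ≤ β + lam * t i + rho * s i := by
      intro i
      rcases le_or_gt δ (x i) with hxi | hxi
      · have hHz : H i = 0 := by
          simp only [hHdef]
          apply sum_eq_zero
          intro j hj
          exfalso
          have h5 := (mem_filter.1 hj).2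
          have := hy1 j
          linarith
        have h1 := hHigh i hxi
        have h2 : lam * max 0 (b - (1 - x i)) ≤ lam * t i :=
          mul_le_mul_of_nonneg_left (max_le (ht0 i) (by linarith [htb i])) hlam0
        have h3 : 0 ≤ rho * s i := mul_nonneg hrho0 (hs0 i)
        linarith
      · have hGz : G i = 0 := by
          simp only [hGdef]
          apply sum_eq_zero
          intro j hj
          exfalso
          have h5 := (mem_filter.1 hj).2
          have := hy0 j
          linarith
        have h1 := hLow i hxi
        have h2 : rho * max 0 (g - x i) ≤ rho * s i :=
          mul_le_mul_of_nonneg_left (max_le (hs0 i) (by linarith [hsg i])) hrho0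
        have h3 : 0 ≤ lam * t i := mul_nonneg hlam0 (ht0 i)
        linarith
    calc ∑ i : Fin N, ∑ j : Fin M, (if δ ≤ |x i - y j| then p i * q j else 0)
        ≤ ∑ i, p i * (G i + H i) := hred
      _ ≤ ∑ i, p i * (β + lam * t i + rho * s i) :=
          sum_le_sum fun i _ => mul_le_mul_of_nonneg_left (hpoint i) (hp i)
      _ = β * (∑ i, p i) + lam * (∑ i, p i * t i) + rho * (∑ i, p i * s i) := by
          rw [mul_sum, mul_sum, mul_sum, ← sum_add_distrib, ← sum_add_distrib]
          exact sum_congr rfl fun i _ => by ring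
      _ = β + lam * W + rho * K2 := by rw [hp1, hsumt, hsums]; ring
      _ ≤ 2 * δ * c := hfin
  -- build the certificate
  clear hred hcomplq hsumt hsums hsdef htdef hGdef hHdef hD1def hD2def hWdef hbdef hgdef hK2def hBl hBh hdisj
  clear hq1 hp1 hy hx hy0 hy1 hρ0 hρ1 hp hq
  clear ρ q p y Bl Bh
  rcases le_or_gt b c with hbc | hbc
  · rcases le_or_gt g c with hgc | hgc
    · -- Case A : b ≤ c, g ≤ c
      refine ⟨c, 0, 0, hc0, le_refl _, le_refl _, ?_, ?_, ?_⟩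
      · intro i _
        exact onehump (hG0 i) (hGb i) (hGD i) (by linarith [hx1 i]) hc0 (le_refl _) hD1nn (Or.inl hbc)
      · intro i _
        exact onehump (hH0 i) (hHg i) (hHD i) (hx0 i) hc0 (le_refl _) hD2nn (Or.inl hgc)
      · rw [hδc]
        nlinarith [mul_nonneg hc0 (by linarith : (0:ℝ) ≤ 1 - 2*c)]
    · -- Case D : b ≤ c < g
      have hgpos : 0 < g := lt_of_le_of_lt hc0 hgc
      have hg2 : 0 < g*g - D2 := by nlinarith [hK2nn, hD2id, mul_pos hgpos (sub_pos.2 hgc)]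
      rcases le_or_gt (b*g) D2 with hbg2 | hbg2
      · -- D1' : β = D2/g, rho = 1
        refine ⟨D2/g, 0, 1, div_nonneg hD2nn hgpos.le, le_refl _, zero_le_one, ?_, ?_, ?_⟩
        · intro i _
          refine onehump (hG0 i) (hGb i) (hGD i) (by linarith [hx1 i]) (div_nonneg hD2nn hgpos.le)
            (le_refl _) hD1nn (Or.inl ?_)
          rw [le_div_iff₀ hgpos]; exact hbg2
        · intro i _
          refine onehump (hH0 i) (hHg i) (hHD i) (hx0 i) (div_nonneg hD2nn hgpos.le)
            zero_le_one hD2nn (Or.inr ⟨?_, ?_, ?_, ?_⟩)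
          · rw [div_mul_cancel₀ _ hgpos.ne']
          · rw [mul_sub, mul_div_cancel₀ _ hgpos.ne', one_mul]
          · nlinarith
          · rw [div_le_iff₀ hgpos]; nlinarith
        · have hst : D2/g ≤ c - K2 := by
            rw [div_le_iff₀ hgpos]
            nlinarith [mul_nonneg hK2nn (by linarith [hbg, hb0] : (0:ℝ) ≤ 1 - g)]
          rw [hδc]
          nlinarith [mul_nonneg hc0 (by linarith : (0:ℝ) ≤ 1 - 2*c)]
      · -- D2' : β = b, rho = g*(g-b)/(g*g-D2)
        have hrho0 : 0 ≤ g*(g-b)/(g*g-D2) :=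
          div_nonneg (mul_nonneg hgpos.le (by linarith)) hg2.le
        refine ⟨b, 0, g*(g-b)/(g*g-D2), hb0, le_refl _, hrho0, ?_, ?_, ?_⟩
        · intro i _
          exact onehump (hG0 i) (hGb i) (hGD i) (by linarith [hx1 i]) hb0 (le_refl _) hD1nn
            (Or.inl (le_refl _))
        · intro i _
          refine onehump (hH0 i) (hHg i) (hHD i) (hx0 i) hb0 hrho0 hD2nn
            (Or.inr ⟨by nlinarith, ?_, by nlinarith, by linarith⟩)
          rw [div_mul_cancel₀ _ hg2.ne']
        · have hrK : g*(g-b)/(g*g-D2) * K2 ≤ c*(g-b) := by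
            rw [div_mul_eq_mul_div, div_le_iff₀ hg2]
            nlinarith [mul_nonneg (mul_nonneg (by linarith : (0:ℝ) ≤ g - b) (by linarith : (0:ℝ) ≤ g - c)) hD2nn, hD2id]
          rw [hδc]
          nlinarith [mul_nonneg (by linarith : (0:ℝ) ≤ c - b) (by linarith : (0:ℝ) ≤ 1 - 2*c),
            mul_nonneg hc0 (by linarith [hbg] : (0:ℝ) ≤ 1 - b - g)]
  · have hbpos : 0 < b := lt_of_le_of_lt hc0 hbc
    have hb2 : 0 < b*b - D1 := by nlinarith [hW0, hD1id, mul_pos hbpos (sub_pos.2 hbc)]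
    rcases le_or_gt g c with hgc | hgc
    · -- Case C : g ≤ c < b
      rcases le_or_gt (g*b) D1 with hgb | hgb
      · -- C1 : β = D1/b, lam = 1
        refine ⟨D1/b, 1, 0, div_nonneg hD1nn hbpos.le, zero_le_one, le_refl _, ?_, ?_, ?_⟩
        · intro i _
          refine onehump (hG0 i) (hGb i) (hGD i) (by linarith [hx1 i]) (div_nonneg hD1nn hbpos.le)
            zero_le_one hD1nn (Or.inr ⟨?_, ?_, ?_, ?_⟩)
          · rw [div_mul_cancel₀ _ hbpos.ne']
          · rw [mul_sub, mul_div_cancel₀ _ hbpos.ne', one_mul]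
          · nlinarith
          · rw [div_le_iff₀ hbpos]; nlinarith
        · intro i _
          refine onehump (hH0 i) (hHg i) (hHD i) (hx0 i) (div_nonneg hD1nn hbpos.le)
            (le_refl _) hD2nn (Or.inl ?_)
          rw [le_div_iff₀ hbpos]; exact hgb
        · have hst : D1/b ≤ c - W := by
            rw [div_le_iff₀ hbpos]
            nlinarith [mul_nonneg hW0 (by linarith [hbg, hg0] : (0:ℝ) ≤ 1 - b)]
          rw [hδc]
          nlinarith [mul_nonneg hc0 (by linarith : (0:ℝ) ≤ 1 - 2*c)]
      · -- C2 : β = g, lam = b*(b-g)/(b*b-D1)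
        have hlam0 : 0 ≤ b*(b-g)/(b*b-D1) :=
          div_nonneg (mul_nonneg hbpos.le (by linarith)) hb2.le
        refine ⟨g, b*(b-g)/(b*b-D1), 0, hg0, hlam0, le_refl _, ?_, ?_, ?_⟩
        · intro i _
          refine onehump (hG0 i) (hGb i) (hGD i) (by linarith [hx1 i]) hg0 hlam0 hD1nn
            (Or.inr ⟨by nlinarith, ?_, by nlinarith, by linarith⟩)
          rw [div_mul_cancel₀ _ hb2.ne']
        · intro i _
          exact onehump (hH0 i) (hHg i) (hHD i) (hx0 i) hg0 (le_refl _) hD2nn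
            (Or.inl (le_refl _))
        · have hlW : b*(b-g)/(b*b-D1) * W ≤ c*(b-g) := by
            rw [div_mul_eq_mul_div, div_le_iff₀ hb2]
            nlinarith [mul_nonneg (mul_nonneg (by linarith : (0:ℝ) ≤ b - g) (by linarith : (0:ℝ) ≤ b - c)) hD1nn, hD1id]
          rw [hδc]
          nlinarith [mul_nonneg (by linarith : (0:ℝ) ≤ c - g) (by linarith : (0:ℝ) ≤ 1 - 2*c),
            mul_nonneg hc0 (by linarith [hbg] : (0:ℝ) ≤ 1 - b - g)]
    · -- Case B : c < b, c < g
      have hgpos : 0 < g := lt_of_le_of_lt hc0 hgc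
      have hg2 : 0 < g*g - D2 := by nlinarith [hK2nn, hD2id, mul_pos hgpos (sub_pos.2 hgc)]
      have hlam0 : 0 ≤ b*(b-c)/(b*b-D1) :=
        div_nonneg (mul_nonneg hbpos.le (by linarith)) hb2.le
      have hrho0 : 0 ≤ g*(g-c)/(g*g-D2) :=
        div_nonneg (mul_nonneg hgpos.le (by linarith)) hg2.le
      refine ⟨c, b*(b-c)/(b*b-D1), g*(g-c)/(g*g-D2), hc0, hlam0, hrho0, ?_, ?_, ?_⟩
      · intro i _
        refine onehump (hG0 i) (hGb i) (hGD i) (by linarith [hx1 i]) hc0 hlam0 hD1nn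
          (Or.inr ⟨by nlinarith [hD1id, hW0], ?_, by nlinarith, by linarith⟩)
        rw [div_mul_cancel₀ _ hb2.ne']
      · intro i _
        refine onehump (hH0 i) (hHg i) (hHD i) (hx0 i) hc0 hrho0 hD2nn
          (Or.inr ⟨by nlinarith [hD2id, hK2nn], ?_, by nlinarith, by linarith⟩)
        rw [div_mul_cancel₀ _ hg2.ne']
      · have hlW : b*(b-c)/(b*b-D1) * W ≤ c*(b-c) := by
          rw [div_mul_eq_mul_div, div_le_iff₀ hb2]
          nlinarith [mul_nonneg (mul_self_nonneg (b-c)) hD1nn, hD1id]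
        have hrK : g*(g-c)/(g*g-D2) * K2 ≤ c*(g-c) := by
          rw [div_mul_eq_mul_div, div_le_iff₀ hg2]
          nlinarith [mul_nonneg (mul_self_nonneg (g-c)) hD2nn, hD2id]
        rw [hδc]
        nlinarith [mul_nonneg hc0 (by linarith [hbg] : (0:ℝ) ≤ 1 - b - g)]
end
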